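/- Let G ≤ Sym(Ω) be quasiprimitive and E a transitive, normal, G-invariant Cartesian decomposition of Ω such that for each Γ ∈ E the component G^Γ is quasiprimitive and the type of G^Γ is not HA, HS or HC (equivalently: G^Γ has a unique minimal normal subgroup which is non-abelian and non-regular, or more simply: Soc(G^Γ) is non-abelian and G^Γ has a unique minimal normal subgroup). Then E is a blow-up decomposition and G is quasiprimitive. -/

import Mathlib

open scoped Pointwise

namespace QP

variable {Ω : Type*}

/-- `P` is a partition of `Ω`. -/
def IsPartition (P : Set (Set Ω)) : Prop :=
  ∅ ∉ P ∧ ∀ ω : Ω, ∃! b : Set Ω, b ∈ P ∧ ω ∈ b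

/-- A proper partition: neither `{Ω}` nor the partition into singletons. -/
def IsProperPartition (P : Set (Set Ω)) : Prop :=
  IsPartition P ∧ P ≠ {Set.univ} ∧ ¬ ∀ b ∈ P, ∃ ω : Ω, b = {ω}

/-- The pointwise stabiliser of the partition `P` (kernel of the action on `P`),
as a subgroup of `Sym(Ω)`: the permutations fixing every block of `P` setwise. -/
def partKernel (P : Set (Set Ω)) : Subgroup (Equiv.Perm Ω) where
  carrier := {g | ∀ b ∈ P, g • b = b}
  one_mem' := by intro b hb; simp
  mul_mem' := by
    intro g h hg hh b hb
    rw [mul_smul, hh b hb, hg b hb]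
  inv_mem' := by
    intro g hg b hb
    rw [inv_smul_eq_iff, hg b hb]

/-- The setwise stabiliser of a partition `P` in `Sym(Ω)`. -/
def partStab (P : Set (Set Ω)) : Subgroup (Equiv.Perm Ω) :=
  MulAction.stabilizer (Equiv.Perm Ω) P

/-- The permutation of the set of blocks of `P` induced by an element of
the stabiliser of `P`. -/
noncomputable def blockPerm (P : Set (Set Ω)) (g : ↥(partStab P)) : Equiv.Perm ↥P where
  toFun b := ⟨(g : Equiv.Perm Ω) • (b : Set Ω), by
    have h1 : (g : Equiv.Perm Ω) • (b : Set Ω) ∈ (g : Equiv.Perm Ω) • P :=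
      Set.smul_mem_smul_set b.2
    rwa [g.2] at h1⟩
  invFun b := ⟨(g : Equiv.Perm Ω)⁻¹ • (b : Set Ω), by
    have h0 : (g : Equiv.Perm Ω) • P = P := g.2
    have h2 : ((g : Equiv.Perm Ω)⁻¹) • P = P := by
      rw [inv_smul_eq_iff, h0]
    have h1 : (g : Equiv.Perm Ω)⁻¹ • (b : Set Ω) ∈ (g : Equiv.Perm Ω)⁻¹ • P :=
      Set.smul_mem_smul_set b.2
    rwa [h2] at h1⟩
  left_inv b := by
    apply Subtype.ext
    simp
  right_inv b := by
    apply Subtype.ext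
    simp

/-- The homomorphism from the stabiliser of a partition `P` to the symmetric
group on the set of blocks of `P`. -/
noncomputable def componentHom (P : Set (Set Ω)) : ↥(partStab P) →* Equiv.Perm ↥P where
  toFun := blockPerm P
  map_one' := by
    apply Equiv.ext; intro b
    apply Subtype.ext
    simp [blockPerm]
  map_mul' := by
    intro g h
    apply Equiv.ext; intro b
    apply Subtype.ext
    simp [blockPerm, mul_smul]

/-- The component `G^P` of `G` on a partition `P` : the permutation group
induced on the set of blocks of `P` by the setwise stabiliser of `P` in `G`. -/
noncomputable def component (G : Subgroup (Equiv.Perm Ω)) (P : Set (Set Ω)) :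
    Subgroup (Equiv.Perm ↥P) :=
  Subgroup.map (componentHom P) (G.subgroupOf (partStab P))

section abstr
variable {X : Type*} [Group X]

/-- `N` is a normal subgroup of the (sub)group `G`. -/
def IsNormalIn (N G : Subgroup X) : Prop :=
  N ≤ G ∧ ∀ g ∈ G, ∀ n ∈ N, g * n * g⁻¹ ∈ N

/-- `N` is a minimal normal subgroup of `G`. -/
def IsMinimalNormalIn (N G : Subgroup X) : Prop :=
  IsNormalIn N G ∧ N ≠ ⊥ ∧
    ∀ K : Subgroup X, IsNormalIn K G → K ≠ ⊥ → K ≤ N → K = N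

/-- The socle of `G`: the subgroup generated by all minimal normal subgroups. -/
def socle (G : Subgroup X) : Subgroup X :=
  ⨆ N ∈ {N : Subgroup X | IsMinimalNormalIn N G}, N

/-- `M` is the internal direct product of the family `N` of subgroups. -/
def IsInternalDirectProductOver {ι : Type*} (M : Subgroup X) (N : ι → Subgroup X) : Prop :=
  (∀ i, N i ≤ M) ∧
  (∀ i j, i ≠ j → ∀ x ∈ N i, ∀ y ∈ N j, Commute x y) ∧
  (⨆ i, N i) = M ∧
  (∀ i, N i ⊓ (⨆ j ∈ ({i}ᶜ : Set ι), N j) = ⊥)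

end abstr

/-- A transitive permutation group on `α`. -/
def IsTransitivePerm {α : Type*} (H : Subgroup (Equiv.Perm α)) : Prop :=
  ∀ a b : α, ∃ g ∈ H, g a = b

/-- A regular permutation group: transitive with trivial point stabilisers. -/
def IsRegularPerm {α : Type*} (H : Subgroup (Equiv.Perm α)) : Prop :=
  IsTransitivePerm H ∧ ∀ g ∈ H, ∀ a : α, g a = a → g = 1

/-- A semiregular permutation group: all point stabilisers are trivial. -/
def IsSemiregularPerm {α : Type*} (H : Subgroup (Equiv.Perm α)) : Prop :=
  ∀ g ∈ H, ∀ a : α, g a = a → g = 1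

/-- A quasiprimitive permutation group: transitive, and every nontrivial
normal subgroup is transitive. -/
def IsQuasiprimitivePerm {α : Type*} (H : Subgroup (Equiv.Perm α)) : Prop :=
  IsTransitivePerm H ∧
    ∀ N : Subgroup (Equiv.Perm α), IsNormalIn N H → N ≠ ⊥ → IsTransitivePerm N

section indexed

variable {ι : Type*}

/-- A Cartesian decomposition, indexed form: a family of pairwise distinct
proper partitions such that any choice of blocks, one from each partition,
intersects in exactly one point. -/
def IsCartesianDecomp (Γ : ι → Set (Set Ω)) : Prop :=
  (∀ i, IsProperPartition (Γ i)) ∧ Function.Injective Γ ∧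
  ∀ c : ι → Set Ω, (∀ i, c i ∈ Γ i) → ∃! ω : Ω, ∀ i, ω ∈ c i

/-- The Cartesian decomposition `Γ` is `M`-normal, with `N i` playing the
role of `M^{Γ i}`: each partition is `M`-invariant, `M` is the internal direct
product of the `N i`, each `N i` acts faithfully on `Γ i`, and
`∏_{j ≠ i} N j` is the kernel of the `M`-action on `Γ i`. -/
structure IsNormalDecomp (M : Subgroup (Equiv.Perm Ω)) (Γ : ι → Set (Set Ω))
    (N : ι → Subgroup (Equiv.Perm Ω)) : Prop where
  invariant : ∀ i, ∀ g ∈ M, ∀ b ∈ Γ i, g • b ∈ Γ i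
  product : IsInternalDirectProductOver M N
  faithful : ∀ i, N i ⊓ partKernel (Γ i) = ⊥
  kernel : ∀ i, M ⊓ partKernel (Γ i) = ⨆ j ∈ ({i}ᶜ : Set ι), N j

end indexed

section setbased

/-- A Cartesian decomposition, as a (finite) set of proper partitions. -/
def IsCartesianDecompSet (E : Set (Set (Set Ω))) : Prop :=
  E.Finite ∧ (∀ P ∈ E, IsProperPartition P) ∧
  ∀ c : Set (Set Ω) → Set Ω, (∀ P ∈ E, c P ∈ P) → ∃! ω : Ω, ∀ P ∈ E, ω ∈ c P

/-- `E` is a homogeneous Cartesian decomposition: all partitions have the same size. -/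
def IsHomogeneous (E : Set (Set (Set Ω))) : Prop :=
  ∀ P ∈ E, ∀ Q ∈ E, Nat.card ↥P = Nat.card ↥Q

/-- `E` is invariant under `G`: `G` permutes the partitions in `E`. -/
def InvariantDec (G : Subgroup (Equiv.Perm Ω)) (E : Set (Set (Set Ω))) : Prop :=
  ∀ g ∈ G, ∀ P ∈ E, g • P ∈ E

/-- `G` is transitive on `E`. -/
def TransitiveOnDec (G : Subgroup (Equiv.Perm Ω)) (E : Set (Set (Set Ω))) : Prop :=
  ∀ P ∈ E, ∀ Q ∈ E, ∃ g ∈ G, g • P = Q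

/-- The Cartesian decomposition `E` is `M`-normal: `M` fixes each partition
in `E` setwise, and `M` is the internal direct product of subgroups `N P`
(`P ∈ E`), where `∏_{Q ≠ P} N Q` is the kernel of the `M`-action on `P`. -/
def IsNormalDecompSet (M : Subgroup (Equiv.Perm Ω)) (E : Set (Set (Set Ω))) : Prop :=
  (∀ g ∈ M, ∀ P ∈ E, g • P = P) ∧
  ∃ N : Set (Set Ω) → Subgroup (Equiv.Perm Ω),
    (∀ P ∈ E, N P ≤ M) ∧
    (∀ P Q, P ∈ E → Q ∈ E → P ≠ Q → ∀ x ∈ N P, ∀ y ∈ N Q, Commute x y) ∧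
    (⨆ P ∈ E, N P) = M ∧
    (∀ P ∈ E, N P ⊓ (⨆ Q ∈ E \ {P}, N Q) = ⊥) ∧
    (∀ P ∈ E, M ⊓ partKernel P = ⨆ Q ∈ E \ {P}, N Q)

/-- `E` is a blow-up decomposition for `G`: a `G`-invariant Cartesian
decomposition on which `G` acts transitively, which is `M`-normal for some
transitive normal subgroup `M` of `G` such that `M^Γ = Soc(G^Γ)` for every
`Γ ∈ E`. -/
def IsBlowUpDecomp (G : Subgroup (Equiv.Perm Ω)) (E : Set (Set (Set Ω))) : Prop :=
  IsCartesianDecompSet E ∧ InvariantDec G E ∧ TransitiveOnDec G E ∧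
  ∃ M : Subgroup (Equiv.Perm Ω), IsNormalIn M G ∧ IsTransitivePerm M ∧
    IsNormalDecompSet M E ∧ ∀ P ∈ E, component M P = socle (component G P)

end setbased

end QP
namespace QP

section generic
variable {X : Type*} [Group X]

theorem subgroup_card_lt {K A : Subgroup X} [Finite X] (h : K < A) :
    Nat.card K < Nat.card A := by
  have h1 : (K : Set X) ⊂ (A : Set X) := by
    rw [Set.ssubset_iff_of_subset (by exact_mod_cast h.le)]
    obtain ⟨x, hxA, hxK⟩ := SetLike.exists_of_lt h
    exact ⟨x, hxA, hxK⟩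
  have := Set.ncard_lt_ncard h1 (Set.toFinite _)
  rw [← Nat.card_coe_set_eq, ← Nat.card_coe_set_eq] at this
  exact this

theorem exists_minimalNormal [Finite X] (G : Subgroup X) :
    ∀ A : Subgroup X, IsNormalIn A G → A ≠ ⊥ → ∃ K, IsMinimalNormalIn K G ∧ K ≤ A := by
  intro A
  induction' hn : Nat.card A using Nat.strong_induction_on with n ih generalizing A
  subst hn
  intro hA hA0
  by_cases hmin : ∀ K : Subgroup X, IsNormalIn K G → K ≠ ⊥ → K ≤ A → K = A
  · exact ⟨A, ⟨hA, hA0, hmin⟩, le_rfl⟩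
  · push_neg at hmin
    obtain ⟨K, hK, hK0, hKA, hKne⟩ := hmin
    obtain ⟨K', h1, h2⟩ := ih (Nat.card K) (subgroup_card_lt (lt_of_le_of_ne hKA hKne))
      K rfl hK hK0
    exact ⟨K', h1, h2.trans hKA⟩

theorem socle_eq_of_unique {G K : Subgroup X} (hK : IsMinimalNormalIn K G)
    (huniq : ∀ K', IsMinimalNormalIn K' G → K' = K) : socle G = K := by
  have hset : {N : Subgroup X | IsMinimalNormalIn N G} = {K} := by
    ext N
    simp only [Set.mem_setOf_eq, Set.mem_singleton_iff]
    exact ⟨fun h => huniq N h, fun h => h ▸ hK⟩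
  rw [socle, hset, iSup_singleton]

variable {Y : Type*} [Group Y]

theorem map_symm_map (e : X ≃* Y) (H : Subgroup X) :
    (H.map e.toMonoidHom).map e.symm.toMonoidHom = H := by
  rw [Subgroup.map_map]
  ext x
  simp [Subgroup.mem_map]

theorem map_map_symm (e : X ≃* Y) (H : Subgroup Y) :
    (H.map e.symm.toMonoidHom).map e.toMonoidHom = H := by
  rw [Subgroup.map_map]
  ext x
  simp [Subgroup.mem_map]

theorem isNormalIn_map (e : X ≃* Y) {N A : Subgroup X} (h : IsNormalIn N A) :
    IsNormalIn (N.map e.toMonoidHom) (A.map e.toMonoidHom) := by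
  constructor
  · exact Subgroup.map_mono h.1
  · rintro g ⟨a, ha, rfl⟩ n ⟨m, hm, rfl⟩
    refine ⟨a * m * a⁻¹, h.2 a ha m hm, by simp⟩

theorem map_ne_bot (e : X ≃* Y) {N : Subgroup X} (h : N ≠ ⊥) :
    N.map e.toMonoidHom ≠ ⊥ := by
  intro hbot
  apply h
  have := congrArg (Subgroup.map e.symm.toMonoidHom) hbot
  rwa [map_symm_map, Subgroup.map_bot] at this

theorem isMinimalNormalIn_map (e : X ≃* Y) {N A : Subgroup X}
    (h : IsMinimalNormalIn N A) :
    IsMinimalNormalIn (N.map e.toMonoidHom) (A.map e.toMonoidHom) := by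
  refine ⟨isNormalIn_map e h.1, map_ne_bot e h.2.1, ?_⟩
  intro K hK hK0 hKle
  have hKsymm : K.map e.symm.toMonoidHom = N := by
    apply h.2.2
    · have := isNormalIn_map e.symm hK
      rwa [map_symm_map] at this
    · intro hbot
      apply hK0
      have := congrArg (Subgroup.map e.toMonoidHom) hbot
      rwa [map_map_symm, Subgroup.map_bot] at this
    · have := Subgroup.map_mono (f := e.symm.toMonoidHom) hKle
      rwa [map_symm_map] at this
  calc K = (K.map e.symm.toMonoidHom).map e.toMonoidHom := (map_map_symm e K).symm
    _ = N.map e.toMonoidHom := by rw [hKsymm]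

end generic

end QP
namespace QP

variable {Ω : Type*}

theorem mem_partStab {P : Set (Set Ω)} {g : Equiv.Perm Ω} :
    g ∈ partStab P ↔ g • P = P := Iff.rfl

theorem mem_partKernel {P : Set (Set Ω)} {g : Equiv.Perm Ω} :
    g ∈ partKernel P ↔ ∀ b ∈ P, g • b = b := Iff.rfl

theorem partKernel_le_partStab (P : Set (Set Ω)) : partKernel P ≤ partStab P := by
  intro g hg
  rw [mem_partStab]
  ext b
  constructor
  · rintro ⟨c, hc, rfl⟩
    show g • c ∈ P
    rw [hg c hc]; exact hc
  · intro hb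
    exact ⟨b, hb, hg b hb⟩

theorem componentHom_apply_coe {P : Set (Set Ω)} (g : ↥(partStab P)) (b : ↥P) :
    ((componentHom P g b : ↥P) : Set Ω) = (g : Equiv.Perm Ω) • (b : Set Ω) := rfl

theorem mem_component {A : Subgroup (Equiv.Perm Ω)} {P : Set (Set Ω)} {x : Equiv.Perm ↥P} :
    x ∈ component A P ↔
      ∃ (g : Equiv.Perm Ω) (hg : g ∈ partStab P), g ∈ A ∧ componentHom P ⟨g, hg⟩ = x := by
  constructor
  · rintro ⟨y, hy, rfl⟩
    exact ⟨(y : Equiv.Perm Ω), y.2, hy, rfl⟩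
  · rintro ⟨g, hg, hgA, rfl⟩
    exact ⟨⟨g, hg⟩, hgA, rfl⟩

theorem componentHom_eq_one {P : Set (Set Ω)} {g : Equiv.Perm Ω} (hg : g ∈ partStab P) :
    componentHom P ⟨g, hg⟩ = 1 ↔ g ∈ partKernel P := by
  constructor
  · intro h b hb
    have := congrArg (fun e => ((e : Equiv.Perm ↥P) ⟨b, hb⟩ : ↥P).1) h
    simpa [componentHom_apply_coe] using this
  · intro h
    apply Equiv.ext
    intro b
    apply Subtype.ext
    have := h b.1 b.2
    simpa [componentHom_apply_coe] using this

theorem component_mono {A B : Subgroup (Equiv.Perm Ω)} (h : A ≤ B) (P : Set (Set Ω)) :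
    component A P ≤ component B P :=
  Subgroup.map_mono (fun x hx => h hx)

theorem component_isNormalIn {M G : Subgroup (Equiv.Perm Ω)} {P : Set (Set Ω)}
    (hMG : IsNormalIn M G) : IsNormalIn (component M P) (component G P) := by
  constructor
  · exact component_mono hMG.1 P
  · intro x hx n hn
    rw [mem_component] at hx hn ⊢
    obtain ⟨g, hgS, hgG, rfl⟩ := hx
    obtain ⟨m, hmS, hmM, rfl⟩ := hn
    refine ⟨g * m * g⁻¹, mul_mem (mul_mem hgS hmS) (inv_mem hgS),
      hMG.2 g hgG m hmM, ?_⟩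
    have : (⟨g * m * g⁻¹, _⟩ : ↥(partStab P)) =
        ⟨g, hgS⟩ * ⟨m, hmS⟩ * (⟨g, hgS⟩)⁻¹ := rfl
    rw [this, map_mul, map_mul, map_inv]

theorem proper_partition_nonempty {P : Set (Set Ω)} (hP : IsProperPartition P) :
    Nonempty Ω := by
  by_contra h
  rw [not_nonempty_iff] at h
  have hPempty : P = ∅ := by
    ext b
    simp only [Set.mem_empty_iff_false, iff_false]
    intro hb
    have : b = ∅ := Set.eq_empty_of_isEmpty b
    exact hP.1.1 (this ▸ hb)
  exact hP.2.2 (by intro b hb; rw [hPempty] at hb; exact absurd hb (Set.notMem_empty b))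

theorem proper_partition_block_ne_univ {P : Set (Set Ω)} (hP : IsProperPartition P)
    {b : Set Ω} (hb : b ∈ P) : b ≠ Set.univ := by
  intro hbuniv
  apply hP.2.1
  subst hbuniv
  ext c
  simp only [Set.mem_singleton_iff]
  constructor
  · intro hc
    obtain ⟨ω, hω⟩ := Set.nonempty_iff_ne_empty.2 (fun h => hP.1.1 (h ▸ hc))
    obtain ⟨b', hb'⟩ := hP.1.2 ω
    have h1 := hb'.2 c ⟨hc, hω⟩
    have h2 := hb'.2 Set.univ ⟨hb, Set.mem_univ ω⟩
    rw [h1, h2]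
  · rintro rfl; exact hb

theorem transitive_not_le_partKernel {M : Subgroup (Equiv.Perm Ω)} {P : Set (Set Ω)}
    (hM : IsTransitivePerm M) (hP : IsProperPartition P) (h : M ≤ partKernel P) :
    False := by
  have hne : Nonempty Ω := proper_partition_nonempty hP
  obtain ⟨ω⟩ := hne
  obtain ⟨b, ⟨hbP, hωb⟩, -⟩ := hP.1.2 ω
  obtain ⟨ω', hω'⟩ := Set.ne_univ_iff_exists_notMem b |>.1
    (proper_partition_block_ne_univ hP hbP)
  obtain ⟨g, hgM, hgω⟩ := hM ω ω'
  have : g • b = b := h hgM b hbP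
  have : g ω ∈ b := by
    rw [← this]
    exact Set.smul_mem_smul_set hωb
  rw [hgω] at this
  exact hω' this

theorem component_ne_bot {M : Subgroup (Equiv.Perm Ω)} {P : Set (Set Ω)}
    (hM : IsTransitivePerm M) (hP : IsProperPartition P)
    (hstab : ∀ m ∈ M, m • P = P) : component M P ≠ ⊥ := by
  intro h
  apply transitive_not_le_partKernel hM hP
  intro m hm
  have hmS : m ∈ partStab P := hstab m hm
  have : componentHom P ⟨m, hmS⟩ ∈ component M P := ⟨⟨m, hmS⟩, hm, rfl⟩
  rw [h, Subgroup.mem_bot] at this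
  exact (componentHom_eq_one hmS).1 this

end QP
namespace QP

variable {Ω : Type*}

/-- The equivalence between blocks of `P` and blocks of `Q = g • P`. -/
noncomputable def blockEquiv {g : Equiv.Perm Ω} {P Q : Set (Set Ω)} (h : g • P = Q) :
    ↥P ≃ ↥Q where
  toFun b := ⟨g • (b : Set Ω), by rw [← h]; exact Set.smul_mem_smul_set b.2⟩
  invFun b := ⟨g⁻¹ • (b : Set Ω), by
    have hb : (b : Set Ω) ∈ g • P := by rw [h]; exact b.2
    obtain ⟨c, hc, hcb⟩ := hb
    rw [← hcb]
    simpa using hc⟩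
  left_inv b := Subtype.ext (by simp)
  right_inv b := Subtype.ext (by simp)

@[simp] theorem blockEquiv_apply_coe {g : Equiv.Perm Ω} {P Q : Set (Set Ω)} (h : g • P = Q)
    (b : ↥P) : ((blockEquiv h b : ↥Q) : Set Ω) = g • (b : Set Ω) := rfl

@[simp] theorem blockEquiv_symm_apply_coe {g : Equiv.Perm Ω} {P Q : Set (Set Ω)} (h : g • P = Q)
    (b : ↥Q) : (((blockEquiv h).symm b : ↥P) : Set Ω) = g⁻¹ • (b : Set Ω) := rfl

/-- `Equiv.permCongr` as a multiplicative equivalence. -/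
noncomputable def permCongrMul {α β : Type*} (e : α ≃ β) : Equiv.Perm α ≃* Equiv.Perm β :=
  { Equiv.permCongr e with
    map_mul' := fun p q => by
      apply Equiv.ext
      intro b
      simp [Equiv.permCongr_apply] }

@[simp] theorem permCongrMul_apply {α β : Type*} (e : α ≃ β) (p : Equiv.Perm α) (b : β) :
    permCongrMul e p b = e (p (e.symm b)) := rfl

theorem conj_mem_partStab {g x : Equiv.Perm Ω} {P Q : Set (Set Ω)} (h : g • P = Q)
    (hx : x ∈ partStab P) : g * x * g⁻¹ ∈ partStab Q := by
  rw [mem_partStab] at hx ⊢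
  rw [← h, mul_smul, mul_smul, inv_smul_smul, hx, h, ← h]

theorem conj_mem_partKernel {g x : Equiv.Perm Ω} {P Q : Set (Set Ω)} (h : g • P = Q)
    (hx : x ∈ partKernel P) : g * x * g⁻¹ ∈ partKernel Q := by
  intro b hb
  rw [← h] at hb
  obtain ⟨c, hc, rfl⟩ := hb
  rw [mul_smul, mul_smul, inv_smul_smul, hx c hc]

theorem map_conj_partKernel (g : Equiv.Perm Ω) (P : Set (Set Ω)) :
    (partKernel P).map (MulAut.conj g).toMonoidHom = partKernel (g • P) := by
  apply le_antisymm
  · rintro x ⟨y, hy, rfl⟩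
    exact conj_mem_partKernel rfl hy
  · intro x hx
    refine ⟨g⁻¹ * x * g, ?_, by simp [MulAut.conj]; group⟩
    have : g⁻¹ • (g • P) = P := inv_smul_smul g P
    have := conj_mem_partKernel this hx
    simpa [mul_assoc] using this

theorem map_conj_self {M G : Subgroup (Equiv.Perm Ω)} (hMG : IsNormalIn M G)
    {g : Equiv.Perm Ω} (hg : g ∈ G) :
    M.map (MulAut.conj g).toMonoidHom = M := by
  apply le_antisymm
  · rintro x ⟨y, hy, rfl⟩
    simpa [MulAut.conj] using hMG.2 g hg y hy
  · intro x hx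
    refine ⟨g⁻¹ * x * g, ?_, by simp [MulAut.conj]; group⟩
    simpa [mul_assoc] using hMG.2 g⁻¹ (inv_mem hg) x hx

theorem componentHom_conj {g x : Equiv.Perm Ω} {P Q : Set (Set Ω)} (h : g • P = Q)
    (hx : x ∈ partStab P) (hmem : g * x * g⁻¹ ∈ partStab Q) :
    componentHom Q ⟨g * x * g⁻¹, hmem⟩ =
      permCongrMul (blockEquiv h) (componentHom P ⟨x, hx⟩) := by
  apply Equiv.ext
  intro b
  apply Subtype.ext
  show (g * x * g⁻¹) • (b : Set Ω) = _
  rw [permCongrMul_apply]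
  show _ = ((blockEquiv h ((componentHom P ⟨x, hx⟩) ((blockEquiv h).symm b)) : ↥Q) : Set Ω)
  rw [blockEquiv_apply_coe]
  rw [show (((componentHom P ⟨x, hx⟩) ((blockEquiv h).symm b) : ↥P) : Set Ω)
      = x • (((blockEquiv h).symm b : ↥P) : Set Ω) from rfl]
  rw [blockEquiv_symm_apply_coe]
  rw [mul_smul, mul_smul]

theorem map_permCongr_component {G : Subgroup (Equiv.Perm Ω)} {g : Equiv.Perm Ω}
    {P Q : Set (Set Ω)} (h : g • P = Q) (hg : g ∈ G) :
    (component G P).map (permCongrMul (blockEquiv h)).toMonoidHom = component G Q := by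
  apply le_antisymm
  · rintro x ⟨y, hy, rfl⟩
    simp only [SetLike.mem_coe] at hy
    rw [mem_component] at hy
    obtain ⟨m, hmS, hmG, rfl⟩ := hy
    show permCongrMul (blockEquiv h) (componentHom P ⟨m, hmS⟩) ∈ component G Q
    rw [← componentHom_conj h hmS (conj_mem_partStab h hmS)]
    exact (mem_component).2 ⟨g * m * g⁻¹, conj_mem_partStab h hmS,
      mul_mem (mul_mem hg hmG) (inv_mem hg), rfl⟩
  · intro x hx
    rw [mem_component] at hx
    obtain ⟨m, hmS, hmG, rfl⟩ := hx
    have hP : g⁻¹ • Q = P := by rw [← h, inv_smul_smul]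
    have hm'S : g⁻¹ * m * g ∈ partStab P := by
      have := conj_mem_partStab hP hmS
      simpa [mul_assoc] using this
    refine ⟨componentHom P ⟨g⁻¹ * m * g, hm'S⟩,
      (mem_component).2 ⟨g⁻¹ * m * g, hm'S, mul_mem (mul_mem (inv_mem hg) hmG) hg, rfl⟩, ?_⟩
    show permCongrMul (blockEquiv h) (componentHom P ⟨g⁻¹ * m * g, hm'S⟩) = componentHom Q ⟨m, hmS⟩
    rw [← componentHom_conj h hm'S (conj_mem_partStab h hm'S)]
    congr 1
    apply Subtype.ext
    show g * (g⁻¹ * m * g) * g⁻¹ = m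
    group

end QP
namespace QP

section coprod
variable {X : Type*} [Group X] {ι : Type*} [Fintype ι] [DecidableEq ι]
variable {H : ι → Subgroup X}
variable (hcomm : Pairwise fun i j => ∀ x y : X, x ∈ H i → y ∈ H j → Commute x y)

theorem coprod_mem_biSup (f : ∀ i, H i) (s : Set ι) (h : ∀ j, j ∉ s → f j = 1) :
    Subgroup.noncommPiCoprod hcomm f ∈ ⨆ j ∈ s, H j := by
  rw [Subgroup.noncommPiCoprod_apply]
  apply Subgroup.noncommProd_mem
  intro i _
  by_cases hi : i ∈ s
  · exact le_biSup H hi (f i).2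
  · rw [h i hi, OneMemClass.coe_one]
    exact one_mem _

theorem coprod_split {x : X} (hx : x ∈ ⨆ i, H i) :
    ∃ f : ∀ i, H i, Subgroup.noncommPiCoprod hcomm f = x ∧ ∀ i,
      x = (f i : X) * Subgroup.noncommPiCoprod hcomm (Function.update f i 1) ∧
      Subgroup.noncommPiCoprod hcomm (Function.update f i 1) ∈
        ⨆ j, ⨆ (_ : j ≠ i), H j := by
  rw [← Subgroup.noncommPiCoprod_range (hcomm := hcomm)] at hx
  obtain ⟨f, rfl⟩ := hx
  refine ⟨f, rfl, fun i => ?_⟩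
  have hkey : f = Pi.mulSingle i (f i) * Function.update f i 1 := by
    funext j
    by_cases hj : j = i
    · subst hj
      simp
    · simp [Pi.mulSingle_eq_of_ne hj, Function.update_of_ne hj]
  constructor
  · conv_lhs => rw [hkey]
    rw [map_mul, Subgroup.noncommPiCoprod_mulSingle]
  · have := coprod_mem_biSup hcomm (Function.update f i 1) {j | j ≠ i}
      (by intro j hj
          simp only [Set.mem_setOf_eq, not_not] at hj
          subst hj
          simp)
    simpa using this

end coprod

end QP
namespace QP

variable {Ω : Type*}

/-- The preimage in `Sym(Ω)` of the socle of the component `G^P`. -/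
noncomputable def sigmaSub (G : Subgroup (Equiv.Perm Ω)) (P : Set (Set Ω)) :
    Subgroup (Equiv.Perm Ω) :=
  Subgroup.map (partStab P).subtype
    (Subgroup.comap (componentHom P) (socle (component G P)))

theorem mem_sigmaSub {G : Subgroup (Equiv.Perm Ω)} {P : Set (Set Ω)} {x : Equiv.Perm Ω} :
    x ∈ sigmaSub G P ↔
      ∃ hx : x ∈ partStab P, componentHom P ⟨x, hx⟩ ∈ socle (component G P) := by
  constructor
  · rintro ⟨y, hy, rfl⟩
    exact ⟨y.2, hy⟩
  · rintro ⟨hx, h⟩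
    exact ⟨⟨x, hx⟩, h, rfl⟩

theorem componentHom_mul {P : Set (Set Ω)} {a b : Equiv.Perm Ω}
    (ha : a ∈ partStab P) (hb : b ∈ partStab P) (hab : a * b ∈ partStab P) :
    componentHom P ⟨a * b, hab⟩ = componentHom P ⟨a, ha⟩ * componentHom P ⟨b, hb⟩ := by
  rw [← map_mul]
  rfl

end QP

/-- If G is quasiprimitive and E is a transitive, normal, G-invariant
Cartesian decomposition whose components are quasiprimitive, each with a unique minimal
normal subgroup and non-abelian socle (so the components are not of type HA, HS or HC),
then E is a blow-up decomposition and G is quasiprimitive. -/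
theorem normal_decomposition_components_not_HA_HS_HC
    {Ω : Type*} [Finite Ω]
    (G : Subgroup (Equiv.Perm Ω)) (E : Set (Set (Set Ω)))
    (hG : QP.IsQuasiprimitivePerm G)
    (hcart : QP.IsCartesianDecompSet E)
    (hinv : QP.InvariantDec G E)
    (htransE : QP.TransitiveOnDec G E)
    (hnormal : ∃ M : Subgroup (Equiv.Perm Ω), QP.IsNormalIn M G ∧
      QP.IsTransitivePerm M ∧ QP.IsNormalDecompSet M E)
    (hqp : ∀ P ∈ E, QP.IsQuasiprimitivePerm (QP.component G P))
    (huniq : ∀ P ∈ E, ∃ K : Subgroup (Equiv.Perm ↥P),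
      QP.IsMinimalNormalIn K (QP.component G P) ∧
      ∀ K' : Subgroup (Equiv.Perm ↥P),
        QP.IsMinimalNormalIn K' (QP.component G P) → K' = K)
    (hnonab : ∀ P ∈ E, ¬ ∀ x ∈ QP.socle (QP.component G P),
        ∀ y ∈ QP.socle (QP.component G P), x * y = y * x) :
    QP.IsBlowUpDecomp G E ∧ QP.IsQuasiprimitivePerm G := by
  classical
  open QP in
  refine ⟨⟨hcart, hinv, htransE, ?_⟩, hG⟩
  by_cases hE : E = ∅
  · obtain ⟨M, hMG, hMt, hMdec⟩ := hnormal
    exact ⟨M, hMG, hMt, hMdec, fun P hP => absurd (hE ▸ hP) (Set.notMem_empty P)⟩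
  obtain ⟨M, hMG, hMt, hMstab, N, hNle, hNcomm, hNsup, hNind, hNker⟩ := hnormal
  haveI : Fintype ↥E := Fintype.ofFinite _
  -- basic translations between sups over `E` and sups over the subtype `↥E`
  have hsupE : ∀ K : Set (Set Ω) → Subgroup (Equiv.Perm Ω),
      (⨆ P ∈ E, K P) = ⨆ i : ↥E, K i.1 := by
    intro K
    apply le_antisymm
    · exact iSup₂_le fun P hP => le_iSup (fun i : ↥E => K i.1) ⟨P, hP⟩
    · exact iSup_le fun i => le_biSup K i.2
  have hdiffE : ∀ (K : Set (Set Ω) → Subgroup (Equiv.Perm Ω)) (P : Set (Set Ω)) (hP : P ∈ E),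
      (⨆ Q ∈ E \ {P}, K Q) = ⨆ j : ↥E, ⨆ (_ : j ≠ (⟨P, hP⟩ : ↥E)), K j.1 := by
    intro K P hP
    apply le_antisymm
    · refine iSup₂_le fun Q hQ => ?_
      exact le_iSup₂ (f := fun (j : ↥E) (_ : j ≠ (⟨P, hP⟩ : ↥E)) => K j.1) ⟨Q, hQ.1⟩
        (fun h => hQ.2 (Set.mem_singleton_iff.2 (congrArg Subtype.val h)))
    · exact iSup₂_le fun j hj =>
        le_biSup K ⟨j.2, fun hm => hj (Subtype.ext (Set.mem_singleton_iff.1 hm))⟩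
  have hcomm : Pairwise fun i j : ↥E => ∀ x y : Equiv.Perm Ω,
      x ∈ N i.1 → y ∈ N j.1 → Commute x y := by
    intro i j hij x y hx hy
    exact hNcomm i.1 j.1 i.2 j.2 (fun h => hij (Subtype.ext h)) x hx y hy
  have hMsup : (⨆ i : ↥E, N i.1) = M := by rw [← hsupE]; exact hNsup
  have hker' : ∀ (P : Set (Set Ω)) (hP : P ∈ E),
      M ⊓ QP.partKernel P = ⨆ j : ↥E, ⨆ (_ : j ≠ (⟨P, hP⟩ : ↥E)), N j.1 := by
    intro P hP; rw [← hdiffE N P hP]; exact hNker P hP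
  have hind' : ∀ (P : Set (Set Ω)) (hP : P ∈ E),
      N P ⊓ (⨆ j : ↥E, ⨆ (_ : j ≠ (⟨P, hP⟩ : ↥E)), N j.1) = ⊥ := by
    intro P hP; rw [← hdiffE N P hP]; exact hNind P hP
  have hMstabSub : ∀ P ∈ E, M ≤ QP.partStab P := fun P hP m hm => hMstab m hm P hP
  -- the component of M on each P ∈ E contains the socle of the component of G
  have hsocle_le : ∀ P (hP : P ∈ E),
      QP.socle (QP.component G P) ≤ QP.component M P ∧ QP.socle (QP.component G P) ≠ ⊥ := by
    intro P hP
    obtain ⟨K₀, hK₀, hU₀⟩ := huniq P hP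
    have hsoc : QP.socle (QP.component G P) = K₀ := QP.socle_eq_of_unique hK₀ hU₀
    have hnorm : QP.IsNormalIn (QP.component M P) (QP.component G P) :=
      QP.component_isNormalIn hMG
    have hne : QP.component M P ≠ ⊥ :=
      QP.component_ne_bot hMt (hcart.2.1 P hP) (fun m hm => hMstab m hm P hP)
    obtain ⟨K, hKmin, hKle⟩ :=
      QP.exists_minimalNormal (QP.component G P) (QP.component M P) hnorm hne
    rw [hsoc, ← hU₀ K hKmin]
    exact ⟨hKle, hKmin.2.1⟩
  -- characterization of N
  have hNchar : ∀ (P : Set (Set Ω)) (hP : P ∈ E),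
      N P = M ⊓ ⨅ Q ∈ E \ {P}, QP.partKernel Q := by
    intro P hP
    apply le_antisymm
    · refine le_inf (hNle P hP) (le_iInf₂ fun Q hQ => ?_)
      have hPQ : P ∈ E \ {Q} :=
        ⟨hP, fun hm => hQ.2 (Set.mem_singleton_iff.2
          (Set.mem_singleton_iff.1 hm).symm)⟩
      have h1 : N P ≤ ⨆ R ∈ E \ {Q}, N R := le_biSup N hPQ
      rw [← hNker Q hQ.1] at h1
      exact h1.trans inf_le_right
    · intro x hx
      obtain ⟨hxM, hxK⟩ := hx
      have hxsup : x ∈ ⨆ i : ↥E, N i.1 := by rw [hMsup]; exact hxM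
      obtain ⟨f, hf, hfi⟩ := QP.coprod_split hcomm hxsup
      have hzero : ∀ j : ↥E, j ≠ (⟨P, hP⟩ : ↥E) → f j = 1 := by
        intro j hj
        have hjd : j.1 ∈ E \ {P} :=
          ⟨j.2, fun hm => hj (Subtype.ext (Set.mem_singleton_iff.1 hm))⟩
        have hxj : x ∈ ⨆ k : ↥E, ⨆ (_ : k ≠ j), N k.1 := by
          rw [show (⨆ k : ↥E, ⨆ (_ : k ≠ j), N k.1) =
              ⨆ k : ↥E, ⨆ (_ : k ≠ (⟨j.1, j.2⟩ : ↥E)), N k.1 from rfl, ← hker' j.1 j.2]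
          exact ⟨hxM, (iInf₂_le j.1 hjd : (⨅ Q ∈ E \ {P}, QP.partKernel Q) ≤ _) hxK⟩
        obtain ⟨hsplit, hc⟩ := hfi j
        have hfj : (f j : Equiv.Perm Ω) ∈ N j.1 ⊓ ⨆ k : ↥E, ⨆ (_ : k ≠ j), N k.1 := by
          refine ⟨(f j).2, ?_⟩
          have hrw : (f j : Equiv.Perm Ω) =
              x * (Subgroup.noncommPiCoprod hcomm (Function.update f j 1))⁻¹ := by
            rw [hsplit]; group
          rw [hrw]
          exact Subgroup.mul_mem _ hxj (Subgroup.inv_mem _ hc)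
        rw [show (N j.1 ⊓ ⨆ k : ↥E, ⨆ (_ : k ≠ j), N k.1) =
            (N j.1 ⊓ ⨆ k : ↥E, ⨆ (_ : k ≠ (⟨j.1, j.2⟩ : ↥E)), N k.1) from rfl,
          hind' j.1 j.2] at hfj
        exact Subtype.ext (by simpa using hfj)
      obtain ⟨hsplit, hc⟩ := hfi ⟨P, hP⟩
      have hupd : Function.update f (⟨P, hP⟩ : ↥E) 1 = 1 := by
        funext j
        by_cases hj : j = (⟨P, hP⟩ : ↥E)
        · subst hj; simp
        · simp [Function.update_of_ne hj, hzero j hj]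
      rw [hupd, map_one, mul_one] at hsplit
      rw [hsplit]
      exact (f ⟨P, hP⟩).2
  -- conjugation moves N P to N (g • P)
  have hNmap : ∀ g ∈ G, ∀ P, ∀ hP : P ∈ E,
      (N P).map (MulAut.conj g).toMonoidHom = N (g • P) := by
    intro g hg P hP
    have hgPE : g • P ∈ E := hinv g hg P hP
    rw [hNchar P hP, hNchar (g • P) hgPE]
    rw [Subgroup.map_inf _ _ _ (MulAut.conj g).injective]
    rw [QP.map_conj_self hMG hg]
    congr 1
    rw [Subgroup.map_equiv_eq_comap_symm']
    simp only [Subgroup.comap_iInf]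
    have hpt : ∀ Q : Set (Set Ω),
        Subgroup.comap (MulAut.conj g).symm.toMonoidHom (QP.partKernel Q)
        = QP.partKernel (g • Q) := by
      intro Q
      rw [← Subgroup.map_equiv_eq_comap_symm', QP.map_conj_partKernel]
    simp only [hpt]
    apply le_antisymm
    · refine le_iInf₂ fun Q' hQ' => ?_
      have h1 : g⁻¹ • Q' ∈ E \ {P} := by
        refine ⟨hinv g⁻¹ (inv_mem hg) Q' hQ'.1, ?_⟩
        intro hm
        apply hQ'.2
        rw [Set.mem_singleton_iff] at hm ⊢
        rw [← hm, smul_inv_smul]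
      have h2 := iInf₂_le (f := fun Q (_ : Q ∈ E \ {P}) => QP.partKernel (g • Q))
        (g⁻¹ • Q') h1
      rwa [smul_inv_smul] at h2
    · refine le_iInf₂ fun Q hQ => ?_
      refine iInf₂_le (f := fun Q' (_ : Q' ∈ E \ {g • P}) => QP.partKernel Q') (g • Q) ?_
      refine ⟨hinv g hg Q hQ.1, ?_⟩
      intro hm
      apply hQ.2
      rw [Set.mem_singleton_iff] at hm ⊢
      exact smul_left_cancel g hm
  -- the socle is transported by conjugation
  have hsocmap : ∀ g ∈ G, ∀ P, ∀ hP : P ∈ E,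
      (QP.socle (QP.component G P)).map
        (QP.permCongrMul (QP.blockEquiv (rfl : g • P = g • P))).toMonoidHom =
      QP.socle (QP.component G (g • P)) := by
    intro g hg P hP
    obtain ⟨K₁, hK₁, hU₁⟩ := huniq P hP
    obtain ⟨K₂, hK₂, hU₂⟩ := huniq (g • P) (hinv g hg P hP)
    rw [QP.socle_eq_of_unique hK₁ hU₁, QP.socle_eq_of_unique hK₂ hU₂]
    apply hU₂
    have h1 := QP.isMinimalNormalIn_map
      (QP.permCongrMul (QP.blockEquiv (rfl : g • P = g • P))) hK₁
    rwa [QP.map_permCongr_component rfl hg] at h1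
  -- sigmaSub is transported by conjugation
  have hσle : ∀ g ∈ G, ∀ P, P ∈ E →
      (QP.sigmaSub G P).map (MulAut.conj g).toMonoidHom ≤ QP.sigmaSub G (g • P) := by
    intro g hg P hP x hx
    obtain ⟨y, hy, rfl⟩ := hx
    simp only [SetLike.mem_coe] at hy
    rw [QP.mem_sigmaSub] at hy
    obtain ⟨hyS, hyK⟩ := hy
    have hconjS : g * y * g⁻¹ ∈ QP.partStab (g • P) := QP.conj_mem_partStab rfl hyS
    show (MulAut.conj g).toMonoidHom y ∈ QP.sigmaSub G (g • P)
    have hxy : (MulAut.conj g).toMonoidHom y = g * y * g⁻¹ := rfl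
    rw [hxy, QP.mem_sigmaSub]
    refine ⟨hconjS, ?_⟩
    rw [QP.componentHom_conj rfl hyS hconjS, ← hsocmap g hg P hP]
    exact ⟨QP.componentHom P ⟨y, hyS⟩, hyK, rfl⟩
  have hσeq : ∀ g ∈ G, ∀ P, ∀ hP : P ∈ E,
      (QP.sigmaSub G P).map (MulAut.conj g).toMonoidHom = QP.sigmaSub G (g • P) := by
    intro g hg P hP
    apply le_antisymm (hσle g hg P hP)
    intro x hx
    have h2 := hσle g⁻¹ (inv_mem hg) (g • P) (hinv g hg P hP)
    rw [inv_smul_smul] at h2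
    refine ⟨g⁻¹ * x * g, h2 ⟨x, hx, ?_⟩, ?_⟩
    · show g⁻¹ * x * g⁻¹⁻¹ = g⁻¹ * x * g
      rw [inv_inv]
    · show g * (g⁻¹ * x * g) * g⁻¹ = x
      group
  -- every element of the socle is realised by an element of N' P
  have hσonto : ∀ P (hP : P ∈ E), ∀ s ∈ QP.socle (QP.component G P),
      ∃ n ∈ N P ⊓ QP.sigmaSub G P, ∃ hn : n ∈ QP.partStab P,
        QP.componentHom P ⟨n, hn⟩ = s := by
    intro P hP s hs
    have hsM : s ∈ QP.component M P := (hsocle_le P hP).1 hs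
    rw [QP.mem_component] at hsM
    obtain ⟨m, hmS, hmM, rfl⟩ := hsM
    have hmSup : m ∈ ⨆ i : ↥E, N i.1 := by rw [hMsup]; exact hmM
    obtain ⟨f, hf, hfi⟩ := QP.coprod_split hcomm hmSup
    obtain ⟨hsplit, hcmem⟩ := hfi ⟨P, hP⟩
    have hcK : Subgroup.noncommPiCoprod hcomm (Function.update f ⟨P, hP⟩ 1) ∈
        M ⊓ QP.partKernel P := by rw [hker' P hP]; exact hcmem
    have hnN : (f ⟨P, hP⟩ : Equiv.Perm Ω) ∈ N P := (f ⟨P, hP⟩).2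
    have hnS : (f ⟨P, hP⟩ : Equiv.Perm Ω) ∈ QP.partStab P := hMstabSub P hP (hNle P hP hnN)
    have hcS : Subgroup.noncommPiCoprod hcomm (Function.update f ⟨P, hP⟩ 1) ∈
        QP.partStab P := QP.partKernel_le_partStab P hcK.2
    have heq : QP.componentHom P ⟨m, hmS⟩ =
        QP.componentHom P ⟨(f ⟨P, hP⟩ : Equiv.Perm Ω), hnS⟩ := by
      have h3 : QP.componentHom P ⟨m, hmS⟩ =
          QP.componentHom P ⟨(f ⟨P, hP⟩ : Equiv.Perm Ω), hnS⟩ *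
          QP.componentHom P ⟨_, hcS⟩ := by
        rw [← QP.componentHom_mul hnS hcS (by rw [← hsplit]; exact hmS)]
        congr 1
        exact Subtype.ext hsplit
      rw [h3, (QP.componentHom_eq_one hcS).2 hcK.2, mul_one]
    exact ⟨(f ⟨P, hP⟩ : Equiv.Perm Ω),
      ⟨hnN, QP.mem_sigmaSub.2 ⟨hnS, by rw [← heq]; exact hs⟩⟩, hnS, heq.symm⟩
  -- now define M'
  set M' : Subgroup (Equiv.Perm Ω) := ⨆ i : ↥E, (N i.1 ⊓ QP.sigmaSub G i.1) with hM'def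
  have hM'leM : M' ≤ M := by
    refine iSup_le fun i => le_trans inf_le_left (hNle i.1 i.2)
  have hM'G : QP.IsNormalIn M' G := by
    constructor
    · exact hM'leM.trans hMG.1
    · intro g hg n hn
      have hmap : M'.map (MulAut.conj g).toMonoidHom ≤ M' := by
        rw [hM'def, Subgroup.map_iSup]
        refine iSup_le fun i => ?_
        rw [Subgroup.map_inf _ _ _ (MulAut.conj g).injective, hNmap g hg i.1 i.2,
          hσeq g hg i.1 i.2]
        exact le_iSup (fun j : ↥E => N j.1 ⊓ QP.sigmaSub G j.1)
          (⟨g • i.1, hinv g hg i.1 i.2⟩ : ↥E)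
      exact hmap ⟨n, hn, rfl⟩
  have hM'ne : M' ≠ ⊥ := by
    obtain ⟨P₀, hP₀⟩ := Set.nonempty_iff_ne_empty.2 hE
    obtain ⟨⟨s, hs⟩, hsne⟩ := Subgroup.ne_bot_iff_exists_ne_one.1 (hsocle_le P₀ hP₀).2
    obtain ⟨n, hnmem, hnS, hneq⟩ := hσonto P₀ hP₀ s hs
    intro hbot
    have hnM' : n ∈ M' :=
      (le_iSup (fun i : ↥E => N i.1 ⊓ QP.sigmaSub G i.1) (⟨P₀, hP₀⟩ : ↥E)) hnmem
    rw [hbot, Subgroup.mem_bot] at hnM'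
    apply hsne
    apply Subtype.ext
    show s = 1
    rw [← hneq]
    subst hnM'
    rw [show (⟨1, hnS⟩ : ↥(QP.partStab P₀)) = 1 from rfl, map_one]
  have hM't : QP.IsTransitivePerm M' := hG.2 M' hM'G hM'ne
  have hcomm' : Pairwise fun i j : ↥E => ∀ x y : Equiv.Perm Ω,
      x ∈ N i.1 ⊓ QP.sigmaSub G i.1 → y ∈ N j.1 ⊓ QP.sigmaSub G j.1 → Commute x y := by
    intro i j hij x y hx hy
    exact hcomm hij x y hx.1 hy.1
  have hmono : ∀ (P : Set (Set Ω)) (hP : P ∈ E),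
      (⨆ j : ↥E, ⨆ (_ : j ≠ (⟨P, hP⟩ : ↥E)), (N j.1 ⊓ QP.sigmaSub G j.1)) ≤
        ⨆ j : ↥E, ⨆ (_ : j ≠ (⟨P, hP⟩ : ↥E)), N j.1 := by
    intro P hP
    exact iSup₂_le fun j hj => le_trans inf_le_left
      (le_iSup₂ (f := fun (j : ↥E) (_ : j ≠ (⟨P, hP⟩ : ↥E)) => N j.1) j hj)
  have hdec : QP.IsNormalDecompSet M' E := by
    refine ⟨fun g hg P hP => hMstab g (hM'leM hg) P hP,
      fun P => N P ⊓ QP.sigmaSub G P, ?_, ?_, ?_, ?_, ?_⟩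
    · intro P hP
      exact le_iSup (fun i : ↥E => N i.1 ⊓ QP.sigmaSub G i.1) (⟨P, hP⟩ : ↥E)
    · intro P Q hP hQ hne x hx y hy
      exact hNcomm P Q hP hQ hne x hx.1 y hy.1
    · rw [hsupE (fun P => N P ⊓ QP.sigmaSub G P)]
    · intro P hP
      rw [eq_bot_iff, ← hNind P hP]
      exact inf_le_inf inf_le_left
        (iSup₂_le fun Q hQ => le_trans inf_le_left (le_biSup N hQ))
    · intro P hP
      apply le_antisymm
      · intro x hx
        obtain ⟨hxM', hxK⟩ := hx
        have hxsup : x ∈ ⨆ i : ↥E, (N i.1 ⊓ QP.sigmaSub G i.1) := by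
          rw [← hM'def]; exact hxM'
        obtain ⟨f, hf, hfi⟩ := QP.coprod_split hcomm' hxsup
        obtain ⟨hsplit, hcmem⟩ := hfi ⟨P, hP⟩
        have hxMK : x ∈ ⨆ j : ↥E, ⨆ (_ : j ≠ (⟨P, hP⟩ : ↥E)), N j.1 := by
          rw [← hker' P hP]
          exact ⟨hM'leM hxM', hxK⟩
        have hfP : (f ⟨P, hP⟩ : Equiv.Perm Ω) ∈
            N P ⊓ (⨆ j : ↥E, ⨆ (_ : j ≠ (⟨P, hP⟩ : ↥E)), N j.1) := by
          refine ⟨(f ⟨P, hP⟩).2.1, ?_⟩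
          have hrw : (f ⟨P, hP⟩ : Equiv.Perm Ω) =
              x * (Subgroup.noncommPiCoprod hcomm' (Function.update f ⟨P, hP⟩ 1))⁻¹ := by
            rw [hsplit]; group
          rw [hrw]
          exact Subgroup.mul_mem _ hxMK (Subgroup.inv_mem _ (hmono P hP hcmem))
        rw [hind' P hP] at hfP
        have hfP1 : f ⟨P, hP⟩ = 1 := Subtype.ext (by simpa using hfP)
        rw [hfP1, OneMemClass.coe_one, one_mul] at hsplit
        rw [hdiffE (fun Q => N Q ⊓ QP.sigmaSub G Q) P hP, hsplit]
        exact hcmem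
      · refine iSup₂_le fun Q hQ => ?_
        refine le_inf ?_ ?_
        · exact le_iSup (fun i : ↥E => N i.1 ⊓ QP.sigmaSub G i.1) (⟨Q, hQ.1⟩ : ↥E)
        · have h1 : N Q ⊓ QP.sigmaSub G Q ≤ ⨆ R ∈ E \ {P}, N R :=
            le_trans inf_le_left (le_biSup N hQ)
          rw [← hNker P hP] at h1
          exact h1.trans inf_le_right
  have hcompM' : ∀ P ∈ E, QP.component M' P = QP.socle (QP.component G P) := by
    intro P hP
    apply le_antisymm
    · intro x hx
      rw [QP.mem_component] at hx
      obtain ⟨m, hmS, hmM', rfl⟩ := hx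
      have hmsup : m ∈ ⨆ i : ↥E, (N i.1 ⊓ QP.sigmaSub G i.1) := by
        rw [← hM'def]; exact hmM'
      obtain ⟨f, hf, hfi⟩ := QP.coprod_split hcomm' hmsup
      obtain ⟨hsplit, hcmem⟩ := hfi ⟨P, hP⟩
      have hcK : Subgroup.noncommPiCoprod hcomm' (Function.update f ⟨P, hP⟩ 1) ∈
          M ⊓ QP.partKernel P := by
        rw [hker' P hP]
        exact hmono P hP hcmem
      have hnσ : (f ⟨P, hP⟩ : Equiv.Perm Ω) ∈ QP.sigmaSub G P := (f ⟨P, hP⟩).2.2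
      rw [QP.mem_sigmaSub] at hnσ
      obtain ⟨hnS, hnK⟩ := hnσ
      have hcS : Subgroup.noncommPiCoprod hcomm' (Function.update f ⟨P, hP⟩ 1) ∈
          QP.partStab P := QP.partKernel_le_partStab P hcK.2
      have heq : QP.componentHom P ⟨m, hmS⟩ =
          QP.componentHom P ⟨(f ⟨P, hP⟩ : Equiv.Perm Ω), hnS⟩ := by
        have h3 : QP.componentHom P ⟨m, hmS⟩ =
            QP.componentHom P ⟨(f ⟨P, hP⟩ : Equiv.Perm Ω), hnS⟩ *
            QP.componentHom P ⟨_, hcS⟩ := by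
          rw [← QP.componentHom_mul hnS hcS (by rw [← hsplit]; exact hmS)]
          congr 1
          exact Subtype.ext hsplit
        rw [h3, (QP.componentHom_eq_one hcS).2 hcK.2, mul_one]
      rw [heq]
      exact hnK
    · intro s hs
      obtain ⟨n, hnmem, hnS, hneq⟩ := hσonto P hP s hs
      rw [QP.mem_component]
      exact ⟨n, hnS,
        (le_iSup (fun i : ↥E => N i.1 ⊓ QP.sigmaSub G i.1) (⟨P, hP⟩ : ↥E)) hnmem, hneq⟩
  exact ⟨M', hM'G, hM't, hdec, hcompM'⟩
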